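/- arXiv:1810.04212 — 3 statements merged into one kernel-verified Lean document; each statement's English description precedes it below -/
import Mathlib

section
/- Let H ∈ (0, 1/2) and let g : ℝ → ℝ be smooth, compactly supported, with ‖g‖_{L²} = 1 and g' ∈ L²(ℝ). Then ∫_ℝ |F(g²)(ξ)|² |ξ|^{1-2H} dξ ≤ 1/(1-H) + 4‖g'‖_{L²}²/H. -/
open Real Complex MeasureTheory Set

lemma aux_integral_deriv_eq_zero (f : ℝ → ℂ) (hf : ContDiff ℝ 1 f)
    (h2f : HasCompactSupport f) : ∫ x : ℝ, deriv f x = 0 := by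
  have hi : Integrable (deriv f) :=
    ((hf.continuous_deriv le_rfl).integrable_of_hasCompactSupport h2f.deriv)
  rw [← intervalIntegral.integral_Iic_add_Ioi (b := (0:ℝ)) hi.integrableOn hi.integrableOn,
    h2f.integral_Iic_deriv_eq hf 0, h2f.integral_Ioi_deriv_eq hf 0]
  ring

theorem stmt_4 (H : ℝ) (hH : H ∈ Set.Ioo (0:ℝ) (1/2))
    (g : ℝ → ℝ) (hg : ContDiff ℝ (⊤ : ℕ∞) g) (hsupp : HasCompactSupport g)
    (hnorm : ∫ x : ℝ, g x ^ 2 = 1) (hg' : MemLp (deriv g) 2 volume) :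
    ∫ ξ : ℝ, ‖∫ x : ℝ, Complex.exp (-(Complex.I * ξ * x)) * ((g x : ℂ)) ^ 2‖ ^ 2
        * |ξ| ^ ((1:ℝ) - 2 * H)
      ≤ 1 / (1 - H) + 4 * (∫ x : ℝ, deriv g x ^ 2) / H := by
  obtain ⟨hH0, hH2⟩ := hH
  set D : ℝ := ∫ x : ℝ, deriv g x ^ 2 with hD_def
  have hD : 0 ≤ D := integral_nonneg fun x => sq_nonneg _
  have hgc : Continuous g := hg.continuous
  have hg'c : Continuous (deriv g) := hg.continuous_deriv (by simp)
  -- Step A : the Fourier transform is bounded by 1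
  have hF1 : ∀ ξ : ℝ, ‖∫ x : ℝ, Complex.exp (-(Complex.I * ξ * x)) * ((g x : ℂ)) ^ 2‖ ≤ 1 := by
    intro ξ
    have hne : ∀ x : ℝ, ‖Complex.exp (-(Complex.I * ξ * x)) * ((g x : ℂ)) ^ 2‖ = g x ^ 2 := by
      intro x
      simp [Complex.norm_exp, map_mul, map_pow, sq_abs]
    calc ‖∫ x : ℝ, Complex.exp (-(Complex.I * ξ * x)) * ((g x : ℂ)) ^ 2‖
        ≤ ∫ x : ℝ, ‖Complex.exp (-(Complex.I * ξ * x)) * ((g x : ℂ)) ^ 2‖ :=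
          norm_integral_le_integral_norm _
      _ = ∫ x : ℝ, g x ^ 2 := by simp_rw [hne]
      _ = 1 := hnorm
  -- Integration by parts
  have hKey : ∀ ξ : ℝ,
      Complex.I * ξ * ∫ x : ℝ, Complex.exp (-(Complex.I * ξ * x)) * ((g x : ℂ)) ^ 2
        = ∫ x : ℝ, Complex.exp (-(Complex.I * ξ * x))
            * (2 * (g x : ℂ) * ((deriv g x : ℝ) : ℂ)) := by
    intro ξ
    set u : ℝ → ℂ := fun x : ℝ => Complex.exp (-(Complex.I * ξ * x)) * ((g x : ℂ)) ^ 2 with hu_def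
    have hderiv : ∀ x : ℝ, HasDerivAt u
        ((-(Complex.I * ξ)) * Complex.exp (-(Complex.I * ξ * x)) * ((g x : ℂ)) ^ 2
          + Complex.exp (-(Complex.I * ξ * x)) * (2 * (g x : ℂ) * ((deriv g x : ℝ) : ℂ))) x := by
      intro x
      have hin : HasDerivAt (fun x : ℝ => -(Complex.I * ξ * (x : ℂ))) (-(Complex.I * ξ)) x := by
        simpa [mul_assoc, mul_comm, Pi.neg_def] using
          ((Complex.ofRealCLM.hasDerivAt (x := x)).const_mul (Complex.I * ξ)).neg
      have he := hin.cexp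
      have hgd : HasDerivAt g (deriv g x) x := ((hg.differentiable (by simp)) x).hasDerivAt
      have hoc : HasDerivAt (fun y : ℝ => ((g y : ℝ) : ℂ)) ((deriv g x : ℝ) : ℂ) x :=
        hgd.ofReal_comp
      have hp : HasDerivAt (fun x : ℝ => ((g x : ℂ)) ^ 2)
          (2 * (g x : ℂ) * ((deriv g x : ℝ) : ℂ)) x := by
        have h2 := hoc.mul hoc
        have : (fun y : ℝ => ((g y : ℝ) : ℂ) * ((g y : ℝ) : ℂ))
            = fun y : ℝ => ((g y : ℂ)) ^ 2 := by
          funext y; ring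
        simp only [Pi.mul_def] at h2
        rw [this] at h2
        exact h2.congr_deriv (by ring)
      have := he.mul hp
      simp only [Pi.mul_def] at this
      exact this.congr_deriv (by ring)
    have hec : Continuous (fun x : ℝ => Complex.exp (-(Complex.I * ξ * x))) := by fun_prop
    have hsC : HasCompactSupport (fun x : ℝ => ((g x : ℂ)) ^ 2) :=
      hsupp.comp_left (g := fun r : ℝ => ((r : ℂ)) ^ 2) (by simp)
    have hsU : HasCompactSupport u := hsC.mul_left
    have hsD : HasCompactSupport (fun x : ℝ => 2 * (g x : ℂ) * ((deriv g x : ℝ) : ℂ)) := by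
      have : HasCompactSupport (fun x : ℝ => ((deriv g x : ℝ) : ℂ)) :=
        hsupp.deriv.comp_left (g := fun r : ℝ => ((r : ℂ))) (by simp)
      exact this.mul_left
    have hcu : ContDiff ℝ 1 u := by
      have h1 : ContDiff ℝ 1 (fun x : ℝ => -(Complex.I * ξ * (x : ℂ))) :=
        ((contDiff_const (c := Complex.I * (ξ:ℂ))).mul Complex.ofRealCLM.contDiff).neg
      exact (Complex.contDiff_exp.comp h1).mul
        ((Complex.ofRealCLM.contDiff.comp (hg.of_le (by simp))).pow 2)
    have hInt0 : Integrable u := hcu.continuous.integrable_of_hasCompactSupport hsU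
    have hInt1 : Integrable (fun x : ℝ =>
        Complex.exp (-(Complex.I * ξ * x)) * (2 * (g x : ℂ) * ((deriv g x : ℝ) : ℂ))) :=
      (hec.mul (by fun_prop)).integrable_of_hasCompactSupport hsD.mul_left
    have hz := aux_integral_deriv_eq_zero u hcu hsU
    have hz2 : ∫ x : ℝ, ((-(Complex.I * ξ)) * u x
        + Complex.exp (-(Complex.I * ξ * x)) * (2 * (g x : ℂ) * ((deriv g x : ℝ) : ℂ))) = 0 := by
      rw [← hz]
      congr 1
      funext x
      rw [(hderiv x).deriv, hu_def]
      ring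
    rw [integral_add (hInt0.const_mul _) hInt1, integral_const_mul] at hz2
    linear_combination -hz2
  -- Cauchy–Schwarz
  have hCS : ∫ x : ℝ, |g x| * |deriv g x| ≤ Real.sqrt D := by
    have hconj : Real.HolderConjugate 2 2 := Real.HolderConjugate.two_two
    have hm1 : MemLp g (ENNReal.ofReal 2) volume := by
      rw [show ENNReal.ofReal 2 = 2 by norm_num]
      exact hgc.memLp_of_hasCompactSupport hsupp
    have hm2 : MemLp (deriv g) (ENNReal.ofReal 2) volume := by
      rw [show ENNReal.ofReal 2 = 2 by norm_num]
      exact hg'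
    have h := integral_mul_norm_le_Lp_mul_Lq hconj hm1 hm2
    have habs : ∀ y : ℝ, ‖y‖ ^ (2:ℝ) = y ^ 2 := fun y => by
      rw [show (2:ℝ) = ((2:ℕ):ℝ) by norm_num, Real.rpow_natCast, Real.norm_eq_abs, _root_.sq_abs]
    simp_rw [habs, Real.norm_eq_abs] at h
    calc ∫ x : ℝ, |g x| * |deriv g x| ≤ _ := h
      _ = Real.sqrt D := by
          rw [hnorm, Real.one_rpow, one_mul, Real.sqrt_eq_rpow]
  -- the decay bound
  have hF2 : ∀ ξ : ℝ, 1 ≤ |ξ| →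
      ‖∫ x : ℝ, Complex.exp (-(Complex.I * ξ * x)) * ((g x : ℂ)) ^ 2‖ ^ 2 ≤ 4 * D / ξ ^ 2 := by
    intro ξ hξ
    set a : ℝ := ‖∫ x : ℝ, Complex.exp (-(Complex.I * ξ * x)) * ((g x : ℂ)) ^ 2‖ with ha_def
    have hSnorm : |ξ| * a ≤ 2 * Real.sqrt D := by
      have h1 : |ξ| * a
          = ‖Complex.I * ξ * ∫ x : ℝ, Complex.exp (-(Complex.I * ξ * x)) * ((g x : ℂ)) ^ 2‖ := by
        rw [norm_mul, norm_mul, Complex.norm_I, Complex.norm_real, Real.norm_eq_abs]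
        ring
      have hne : ∀ x : ℝ, ‖Complex.exp (-(Complex.I * ξ * x))
          * (2 * (g x : ℂ) * ((deriv g x : ℝ) : ℂ))‖ = 2 * (|g x| * |deriv g x|) := by
        intro x
        simp [Complex.norm_exp, map_mul,
          abs_mul]
        ring
      rw [h1, hKey ξ]
      calc ‖∫ x : ℝ, Complex.exp (-(Complex.I * ξ * x))
              * (2 * (g x : ℂ) * ((deriv g x : ℝ) : ℂ))‖
          ≤ ∫ x : ℝ, ‖Complex.exp (-(Complex.I * ξ * x))
              * (2 * (g x : ℂ) * ((deriv g x : ℝ) : ℂ))‖ := norm_integral_le_integral_norm _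
        _ = ∫ x : ℝ, 2 * (|g x| * |deriv g x|) := by simp_rw [hne]
        _ = 2 * ∫ x : ℝ, |g x| * |deriv g x| := integral_const_mul 2 _
        _ ≤ 2 * Real.sqrt D := by linarith [hCS]
    have ha0 : 0 ≤ a := norm_nonneg _
    have hξ1 : (0:ℝ) < |ξ| := lt_of_lt_of_le one_pos hξ
    have hξ0 : 0 < ξ ^ 2 := by rw [← _root_.sq_abs]; exact pow_pos hξ1 2
    rw [le_div_iff₀ hξ0]
    have hsq : (|ξ| * a) ^ 2 ≤ (2 * Real.sqrt D) ^ 2 := by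
      apply pow_le_pow_left₀ (by positivity) hSnorm _
    calc a ^ 2 * ξ ^ 2 = (|ξ| * a) ^ 2 := by rw [mul_pow, _root_.sq_abs]; ring
      _ ≤ (2 * Real.sqrt D) ^ 2 := hsq
      _ = 4 * D := by rw [mul_pow, Real.sq_sqrt hD]; norm_num
  -- the dominating function
  set φ : ℝ → ℝ := fun t => if t ≤ 1 then t ^ ((1:ℝ) - 2*H) else 4*D*t ^ (-1 - 2*H) with hφ
  have hr1 : (-1:ℝ) < 1 - 2*H := by linarith
  have hr2 : (-1 - 2*H : ℝ) < -1 := by linarith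
  have hIoc : IntegrableOn φ (Ioc 0 1) := by
    have h0 : IntegrableOn (fun t : ℝ => t ^ ((1:ℝ) - 2*H)) (Ioc 0 1) := by
      have := intervalIntegral.intervalIntegrable_rpow' (a := 0) (b := 1) hr1
      rwa [intervalIntegrable_iff_integrableOn_Ioc_of_le zero_le_one] at this
    exact h0.congr_fun (fun t ht => by simp [hφ, ht.2]) measurableSet_Ioc
  have hIoi1 : IntegrableOn φ (Ioi 1) := by
    have h0 : IntegrableOn (fun t : ℝ => 4*D*t ^ (-1 - 2*H)) (Ioi 1) :=
      (integrableOn_Ioi_rpow_of_lt hr2 one_pos).const_mul (4*D)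
    exact h0.congr_fun (fun t ht => by simp [hφ, not_le.mpr (mem_Ioi.mp ht)]) measurableSet_Ioi
  have hIoi0 : IntegrableOn φ (Ioi 0) := by
    rw [← Ioc_union_Ioi_eq_Ioi (zero_le_one (α := ℝ))]
    exact hIoc.union hIoi1
  have habs : IntegrableOn (fun x : ℝ => φ |x|) (Ioi 0) :=
    hIoi0.congr_fun (fun t ht => by rw [abs_of_pos (mem_Ioi.mp ht)]) measurableSet_Ioi
  have hIic : IntegrableOn (fun x : ℝ => φ |x|) (Iic 0) := by
    rw [← Measure.map_neg_eq_self (volume : Measure ℝ)]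
    have m : MeasurableEmbedding fun x : ℝ => -x := (Homeomorph.neg ℝ).measurableEmbedding
    rw [m.integrableOn_map_iff]
    simp_rw [Function.comp_def, abs_neg, neg_preimage, neg_Iic, neg_zero]
    exact Iff.mpr integrableOn_Ici_iff_integrableOn_Ioi habs
  have hGint : Integrable (fun x : ℝ => φ |x|) := by
    rw [← integrableOn_univ, ← Iic_union_Ioi (a := (0:ℝ))]
    exact hIic.union habs
  have hGval : ∫ x : ℝ, φ |x| = 1 / (1 - H) + 4 * D / H := by
    have hdisj : Disjoint (Ioc (0:ℝ) 1) (Ioi 1) :=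
      disjoint_left.mpr fun x hx hx' => absurd hx.2 (not_le.mpr hx')
    have e1 : ∫ t in Ioc (0:ℝ) 1, φ t = 1 / (2 - 2*H) := by
      rw [setIntegral_congr_fun measurableSet_Ioc
        (fun t (ht : t ∈ Ioc (0:ℝ) 1) => by simp [hφ, ht.2] :
          EqOn φ (fun t : ℝ => t ^ ((1:ℝ) - 2*H)) _)]
      rw [← intervalIntegral.integral_of_le zero_le_one, integral_rpow (Or.inl hr1)]
      rw [Real.one_rpow, Real.zero_rpow (by linarith : (1:ℝ) - 2*H + 1 ≠ 0)]
      ring_nf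
    have e2 : ∫ t in Ioi (1:ℝ), φ t = 4 * D / (2*H) := by
      rw [setIntegral_congr_fun measurableSet_Ioi
        (fun t (ht : t ∈ Ioi (1:ℝ)) => by simp [hφ, not_le.mpr (mem_Ioi.mp ht)] :
          EqOn φ (fun t : ℝ => 4*D*t ^ (-1 - 2*H)) _)]
      rw [integral_const_mul, integral_Ioi_rpow_of_lt hr2 one_pos]
      rw [Real.one_rpow]
      rw [show (-1:ℝ) - 2*H + 1 = -(2*H) by ring]
      field_simp [hH0.ne']
    have e0 : ∫ x : ℝ, φ |x| = 2 * ∫ t in Ioi (0:ℝ), φ t := integral_comp_abs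
    rw [e0, ← Ioc_union_Ioi_eq_Ioi (zero_le_one (α := ℝ)),
      setIntegral_union hdisj measurableSet_Ioi hIoc hIoi1, e1, e2]
    have h1 : (1:ℝ) - H ≠ 0 := by linarith
    have h2 : H ≠ 0 := ne_of_gt hH0
    have h3 : (2:ℝ) - 2*H ≠ 0 := by linarith
    field_simp
  -- pointwise comparison
  have hmono : ∀ ξ : ℝ,
      ‖∫ x : ℝ, Complex.exp (-(Complex.I * ξ * x)) * ((g x : ℂ)) ^ 2‖ ^ 2
        * |ξ| ^ ((1:ℝ) - 2 * H) ≤ φ |ξ| := by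
    intro ξ
    by_cases h : |ξ| ≤ 1
    · rw [hφ]
      simp only [if_pos h]
      have h1 : ‖∫ x : ℝ, Complex.exp (-(Complex.I * ξ * x)) * ((g x : ℂ)) ^ 2‖ ^ 2 ≤ 1 :=
        pow_le_one₀ (norm_nonneg _) (hF1 ξ)
      exact mul_le_of_le_one_left (Real.rpow_nonneg (abs_nonneg ξ) _) h1
    · push_neg at h
      rw [hφ]
      simp only [if_neg (not_le.mpr h)]
      have hpos : (0:ℝ) < |ξ| := lt_trans one_pos h
      have heq : (4 * D / ξ ^ 2) * |ξ| ^ ((1:ℝ) - 2*H) = 4 * D * |ξ| ^ (-1 - 2*H) := by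
        rw [← _root_.sq_abs ξ, ← Real.rpow_natCast |ξ| 2, div_mul_eq_mul_div, mul_div_assoc,
          ← Real.rpow_sub hpos]
        rw [show (1:ℝ) - 2*H - ((2:ℕ):ℝ) = -1 - 2*H by push_cast; ring]
      rw [← heq]
      exact mul_le_mul_of_nonneg_right (hF2 ξ h.le) (Real.rpow_nonneg (abs_nonneg ξ) _)
  calc ∫ ξ : ℝ, ‖∫ x : ℝ, Complex.exp (-(Complex.I * ξ * x)) * ((g x : ℂ)) ^ 2‖ ^ 2
        * |ξ| ^ ((1:ℝ) - 2 * H)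
      ≤ ∫ ξ : ℝ, φ |ξ| := by
        apply integral_mono_of_nonneg
        · exact ae_of_all _ fun ξ => by positivity
        · exact hGint
        · exact ae_of_all _ hmono
    _ = 1 / (1 - H) + 4 * D / H := hGval
end

section
/- Let g : [0,T] → [0,∞) be integrable with ∫_0^T g(s) ds < ∞, let (f_n)_{n≥0} be nonnegative functions on [0,T] with sup_{0≤s≤T} f_0(s) < ∞, and suppose f_n(t) ≤ ∫_0^t f_{n-1}(s) g(t-s) ds for all n ≥ 1 and t ∈ [0,T]. Then Σ_{n≥0} f_n(t) converges uniformly on [0,T]. -/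
open Real MeasureTheory Filter

/-! Weight time by `e^{-r t}`. By dominated convergence `∫₀ᵀ e^{-r u} |g u| du → 0` as
`r → ∞`, so fix `r ≥ 0` making it at most `1/2`. Since `e^{r s} = e^{r t} e^{-r (t - s)}`, the
convolution inequality carries the bound `f n t ≤ C 2⁻ⁿ e^{r t}` from `n` to `n + 1`, and the
Weierstrass M-test with `C e^{r T} 2⁻ⁿ` gives uniform convergence. -/

open Set Topology

theorem tendsto_integral_exp_neg_mul {μ : Measure ℝ} {g : ℝ → ℝ} (hg : Integrable g μ)
    (hpos : ∀ᵐ s ∂μ, 0 < s) :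
    Tendsto (fun r => ∫ s, exp (-(r * s)) * g s ∂μ) atTop (𝓝 0) := by
  have hlim := tendsto_integral_filter_of_dominated_convergence (l := atTop)
    (F := fun r s => exp (-(r * s)) * g s) (f := 0) (fun s => ‖g s‖)
    (Eventually.of_forall fun r =>
      (by fun_prop : Continuous fun s => exp (-(r * s))).aestronglyMeasurable.mul
        hg.aestronglyMeasurable)
    ((eventually_ge_atTop 0).mono fun r hr => hpos.mono fun s hs => by
      rw [norm_mul, norm_of_nonneg (exp_pos _).le]
      exact mul_le_of_le_one_left (norm_nonneg _)
        (exp_le_one_iff.2 (neg_nonpos.2 (mul_nonneg hr hs.le))))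
    hg.norm
    (hpos.mono fun s hs => by
      simpa using (tendsto_exp_neg_atTop_nhds_zero.comp
        (tendsto_id.atTop_mul_const hs)).mul_const (g s))
  simpa using hlim

theorem integral_mul_comp_sub_le_mul_exp {φ g : ℝ → ℝ} {t r B : ℝ} (ht : 0 ≤ t)
    (hg : IntegrableOn g (Icc 0 t)) (hφ_nonneg : ∀ s ∈ Icc 0 t, 0 ≤ φ s)
    (hφ : ∀ s ∈ Icc 0 t, φ s ≤ B * exp (r * s)) :
    ∫ s in 0..t, φ s * g (t - s) ≤
      B * exp (r * t) * ∫ u in Ioc 0 t, exp (-(r * u)) * |g u| := by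
  set w : ℝ → ℝ := fun u => exp (-(r * u)) * |g u|
  have hw : IntegrableOn w (Icc 0 t) :=
    IntegrableOn.continuousOn_mul (by fun_prop) hg.abs isCompact_Icc
  have hB : 0 ≤ B := by
    simpa using (hφ_nonneg 0 ⟨le_rfl, ht⟩).trans (hφ 0 ⟨le_rfl, ht⟩)
  have hshift : ∫ s in 0..t, B * exp (r * t) * w (t - s)
      = B * exp (r * t) * ∫ u in Ioc 0 t, w u := by
    rw [intervalIntegral.integral_const_mul, intervalIntegral.integral_comp_sub_left,
      sub_self, sub_zero, intervalIntegral.integral_of_le ht]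
  by_cases hint : IntervalIntegrable (fun s => φ s * g (t - s)) volume 0 t
  · rw [← hshift]
    refine intervalIntegral.integral_mono_on ht hint ?_ fun s hs => ?_
    · have := ((intervalIntegrable_iff_integrableOn_Ioc_of_le ht).2
        (hw.mono_set Ioc_subset_Icc_self)).comp_sub_left t
      simpa using this.symm.const_mul (B * exp (r * t))
    · have hexp : exp (r * s) = exp (r * t) * exp (-(r * (t - s))) := by
        rw [← exp_add]; ring_nf
      calc φ s * g (t - s) ≤ φ s * |g (t - s)| :=
            mul_le_mul_of_nonneg_left (le_abs_self _) (hφ_nonneg s hs)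
        _ ≤ B * exp (r * s) * |g (t - s)| :=
            mul_le_mul_of_nonneg_right (hφ s hs) (abs_nonneg _)
        _ = B * exp (r * t) * w (t - s) := by rw [hexp]; ring
  · rw [intervalIntegral.integral_undef hint]
    positivity

theorem le_mul_pow_mul_exp_of_le_convolution {T C r q : ℝ} {g : ℝ → ℝ}
    {f : ℕ → ℝ → ℝ} (hg : IntegrableOn g (Icc 0 T)) (hr : 0 ≤ r)
    (hq : ∫ u in Ioc 0 T, exp (-(r * u)) * |g u| ≤ q)
    (hf_nonneg : ∀ n, ∀ t ∈ Icc 0 T, 0 ≤ f n t) (hf0 : ∀ t ∈ Icc 0 T, f 0 t ≤ C)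
    (hrec : ∀ n : ℕ, ∀ t ∈ Icc 0 T, f (n + 1) t ≤ ∫ s in 0..t, f n s * g (t - s))
    (n : ℕ) : ∀ t ∈ Icc 0 T, f n t ≤ C * q ^ n * exp (r * t) := by
  induction n with
  | zero =>
    intro t ht
    have hC : 0 ≤ C := (hf_nonneg 0 t ht).trans (hf0 t ht)
    simpa using (hf0 t ht).trans (le_mul_of_one_le_right hC (one_le_exp (mul_nonneg hr ht.1)))
  | succ n ih =>
    intro t ht
    have hsub : Icc 0 t ⊆ Icc 0 T := Icc_subset_Icc_right ht.2
    have hw : IntegrableOn (fun u => exp (-(r * u)) * |g u|) (Ioc 0 T) :=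
      (IntegrableOn.continuousOn_mul (by fun_prop) hg.abs isCompact_Icc).mono_set
        Ioc_subset_Icc_self
    have hmono : ∫ u in Ioc 0 t, exp (-(r * u)) * |g u| ≤ q :=
      (setIntegral_mono_set hw (ae_of_all _ fun u => by positivity)
        (Ioc_subset_Ioc_right ht.2).eventuallyLE).trans hq
    have hB : 0 ≤ C * q ^ n * exp (r * t) := (hf_nonneg n t ht).trans (ih t ht)
    calc f (n + 1) t ≤ ∫ s in 0..t, f n s * g (t - s) := hrec n t ht
      _ ≤ C * q ^ n * exp (r * t) * ∫ u in Ioc 0 t, exp (-(r * u)) * |g u| :=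
          integral_mul_comp_sub_le_mul_exp ht.1 (hg.mono_set hsub)
            (fun s hs => hf_nonneg n s (hsub hs)) (fun s hs => ih s (hsub hs))
      _ ≤ C * q ^ n * exp (r * t) * q := mul_le_mul_of_nonneg_left hmono hB
      _ = C * q ^ (n + 1) * exp (r * t) := by ring

theorem stmt_17_general (T : ℝ) (g : ℝ → ℝ)
    (hg_int : IntegrableOn g (Set.Icc (0:ℝ) T))
    (f : ℕ → ℝ → ℝ)
    (hf_nonneg : ∀ n, ∀ t ∈ Set.Icc (0:ℝ) T, 0 ≤ f n t)
    (hf0 : ∃ C : ℝ, ∀ s ∈ Set.Icc (0:ℝ) T, f 0 s ≤ C)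
    (hrec : ∀ n : ℕ, ∀ t ∈ Set.Icc (0:ℝ) T,
      f (n + 1) t ≤ ∫ s in (0:ℝ)..t, f n s * g (t - s)) :
    TendstoUniformlyOn (fun N t => ∑ n ∈ Finset.range N, f n t)
      (fun t => ∑' n : ℕ, f n t) atTop (Set.Icc (0:ℝ) T) := by
  obtain ⟨C, hC⟩ := hf0
  have hsmall := tendsto_integral_exp_neg_mul (hg_int.mono_set Ioc_subset_Icc_self).abs
    (ae_restrict_of_forall_mem measurableSet_Ioc fun s hs => hs.1)
  obtain ⟨r, hq, hr⟩ :=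
    ((hsmall.eventually (ge_mem_nhds one_half_pos)).and (eventually_ge_atTop 0)).exists
  have hbound := le_mul_pow_mul_exp_of_le_convolution hg_int hr hq hf_nonneg hC hrec
  refine tendstoUniformlyOn_tsum_nat (summable_geometric_two.mul_left (C * exp (r * T)))
    fun n t ht => ?_
  have hC0 : 0 ≤ C := (hf_nonneg 0 t ht).trans (hC t ht)
  calc ‖f n t‖ = f n t := norm_of_nonneg (hf_nonneg n t ht)
    _ ≤ C * (1 / 2) ^ n * exp (r * t) := hbound n t ht
    _ ≤ C * exp (r * T) * (1 / 2) ^ n := by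
      rw [mul_right_comm]
      gcongr
      exact ht.2

theorem stmt_17 (T : ℝ) (hT : 0 < T) (g : ℝ → ℝ)
    (hg_nonneg : ∀ s ∈ Set.Icc (0:ℝ) T, 0 ≤ g s)
    (hg_int : IntegrableOn g (Set.Icc (0:ℝ) T))
    (f : ℕ → ℝ → ℝ)
    (hf_nonneg : ∀ n, ∀ t ∈ Set.Icc (0:ℝ) T, 0 ≤ f n t)
    (hf0 : ∃ C : ℝ, ∀ s ∈ Set.Icc (0:ℝ) T, f 0 s ≤ C)
    (hrec : ∀ n : ℕ, ∀ t ∈ Set.Icc (0:ℝ) T,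
      f (n + 1) t ≤ ∫ s in (0:ℝ)..t, f n s * g (t - s)) :
    TendstoUniformlyOn (fun N t => ∑ n ∈ Finset.range N, f n t)
      (fun t => ∑' n : ℕ, f n t) atTop (Set.Icc (0:ℝ) T) :=
  stmt_17_general T g hg_int f hf_nonneg hf0 hrec
end

section
/- Let H ∈ (0,1/2), and for a bounded open set D ⊂ ℝ define E(D) = sup over smooth g supported in D with ‖g‖₂² + ½‖g'‖₂² = 1 of ∫_ℝ |F(g²)(λ)|² |λ|^{1-2H} dλ. Then E(D) < ∞, and furthermore E(D) ≤ 1/(1-H) + 16/H. -/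
open Real Complex MeasureTheory Set

lemma ibp_zero {φ φ' : ℝ → ℂ} (hd : ∀ x, HasDerivAt φ (φ' x) x)
    (hs : HasCompactSupport φ) (hc : Continuous φ') : (∫ x : ℝ, φ' x) = 0 := by
  obtain ⟨r, hr⟩ := hs.isCompact.isBounded.subset_closedBall 0
  set r' : ℝ := max r 0 with hr'
  set R : ℝ := r' + 1 with hR
  have hr'0 : 0 ≤ r' := le_max_right _ _
  have hsub : tsupport φ ⊆ Set.Icc (-r') r' := by
    refine hr.trans ?_
    rw [Real.closedBall_eq_Icc]
    intro x hx
    simp only [zero_sub, zero_add, Set.mem_Icc] at hx ⊢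
    constructor <;> [linarith [le_max_left r 0]; linarith [le_max_left r 0]]
  have hzero : ∀ x ∉ Set.Icc (-R) R, φ' x = 0 := by
    intro x hx
    rw [← (hd x).deriv]
    by_contra h
    have hmem : x ∈ tsupport φ := support_deriv_subset (by simpa using h)
    have := hsub hmem
    simp only [Set.mem_Icc, not_and_or, not_le] at hx this
    rcases hx with h1 | h1 <;> linarith [this.1, this.2]
  have hRle : -R ≤ R := by linarith
  have e1 : (∫ x : ℝ, φ' x) = ∫ x in Set.Icc (-R) R, φ' x :=
    (setIntegral_eq_integral_of_forall_compl_eq_zero hzero).symm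
  have e2 : (∫ x in Set.Icc (-R) R, φ' x) = ∫ x in (-R)..R, φ' x := by
    rw [integral_Icc_eq_integral_Ioc, intervalIntegral.integral_of_le hRle]
  have e3 : (∫ x in (-R)..R, φ' x) = φ R - φ (-R) :=
    intervalIntegral.integral_eq_sub_of_hasDerivAt (fun x _ => hd x) (hc.intervalIntegrable _ _)
  have hφR : φ R = 0 := by
    apply image_eq_zero_of_notMem_tsupport
    intro h
    have := hsub h
    simp only [Set.mem_Icc] at this
    linarith [this.2]
  have hφnR : φ (-R) = 0 := by
    apply image_eq_zero_of_notMem_tsupport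
    intro h
    have := hsub h
    simp only [Set.mem_Icc] at this
    linarith [this.1]
  rw [e1, e2, e3, hφR, hφnR, sub_zero]

lemma exp_deriv_piece (ξ : ℝ) (x : ℝ) :
    HasDerivAt (fun x : ℝ => Complex.exp (-(Complex.I * ξ * x)))
      (-(Complex.I * ξ) * Complex.exp (-(Complex.I * ξ * x))) x := by
  have he : HasDerivAt (fun w : ℂ => Complex.exp (-(Complex.I * ξ) * w))
      (-(Complex.I * ξ) * Complex.exp (-(Complex.I * ξ) * (x : ℂ))) (x : ℂ) := by
    have := (((hasDerivAt_id (x : ℂ)).const_mul (-(Complex.I * ξ)))).cexp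
    simpa [mul_comm] using this
  have := he.comp_ofReal
  simpa [neg_mul, mul_assoc] using this

lemma full_deriv_piece {g : ℝ → ℝ} (hg : ContDiff ℝ (⊤ : ℕ∞) g) (ξ x : ℝ) :
    HasDerivAt (fun x : ℝ => Complex.exp (-(Complex.I * ξ * x)) * ((g x : ℂ)) ^ 2)
      (-(Complex.I * ξ) * (Complex.exp (-(Complex.I * ξ * x)) * ((g x : ℂ)) ^ 2)
        + Complex.exp (-(Complex.I * ξ * x)) * ((2 * g x * deriv g x : ℝ) : ℂ)) x := by
  have hgx : HasDerivAt g (deriv g x) x := (hg.differentiable (by simp) x).hasDerivAt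
  have h2 : HasDerivAt (fun x : ℝ => ((g x : ℂ)) ^ 2)
      (((2 * g x * deriv g x : ℝ) : ℂ)) x := by
    have hfun : (fun x : ℝ => ((g x : ℂ)) ^ 2) = fun x : ℝ => ((g x ^ 2 : ℝ) : ℂ) := by
      funext y; push_cast; ring
    rw [hfun]
    have := (hgx.fun_pow 2).ofReal_comp
    convert this using 1
    push_cast; ring
  have := (exp_deriv_piece ξ x).fun_mul h2
  refine this.congr_deriv ?_
  ring

noncomputable def fbd (H : ℝ) (t : ℝ) : ℝ := if t ≤ 1 then t ^ (1 - 2*H) else 4 * t ^ (-(1 + 2*H))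

lemma fbd_integrableOn_Ioi (H : ℝ) (hH1 : 0 < H) (hH2 : H < 1/2) :
    IntegrableOn (fbd H) (Ioi (0:ℝ)) := by
  have hc : Continuous (fun t : ℝ => t ^ (1 - 2*H)) := by
    rw [continuous_iff_continuousAt]
    exact fun t => Real.continuousAt_rpow_const t _ (Or.inr (by linarith))
  have i1 : IntegrableOn (fbd H) (Ioc (0:ℝ) 1) := by
    refine (hc.integrableOn_Ioc).congr_fun (fun t ht => ?_) measurableSet_Ioc
    simp [fbd, ht.2]
  have i2 : IntegrableOn (fbd H) (Ioi (1:ℝ)) := by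
    refine IntegrableOn.congr_fun
      ((integrableOn_Ioi_rpow_of_lt (a := -(1+2*H)) (by linarith) one_pos).const_mul 4)
      (fun t ht => ?_) measurableSet_Ioi
    simp [fbd, not_le.mpr (mem_Ioi.mp ht)]
  rw [← Set.Ioc_union_Ioi_eq_Ioi (zero_le_one)]
  exact i1.union i2

lemma fbd_abs_integrable (H : ℝ) (hH1 : 0 < H) (hH2 : H < 1/2) :
    Integrable (fun ξ : ℝ => fbd H |ξ|) := by
  have intOn : IntegrableOn (fun ξ : ℝ => fbd H |ξ|) (Ioi (0:ℝ)) :=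
    (fbd_integrableOn_Ioi H hH1 hH2).congr_fun (fun t ht => by rw [abs_of_pos (mem_Ioi.mp ht)])
      measurableSet_Ioi
  have int_Iic : IntegrableOn (fun x : ℝ ↦ fbd H |x|) (Iic 0) := by
    rw [← Measure.map_neg_eq_self (volume : Measure ℝ)]
    have m : MeasurableEmbedding fun x : ℝ => -x := (Homeomorph.neg ℝ).measurableEmbedding
    rw [m.integrableOn_map_iff]
    simp_rw [Function.comp_def, abs_neg, neg_preimage, neg_Iic, neg_zero]
    exact (integrableOn_Ici_iff_integrableOn_Ioi enorm_ne_top).mpr intOn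
  have := int_Iic.union intOn
  rw [Iic_union_Ioi] at this
  exact integrableOn_univ.mp this

lemma fbd_abs_integral (H : ℝ) (hH1 : 0 < H) (hH2 : H < 1/2) :
    (∫ ξ : ℝ, fbd H |ξ|) = 1/(1-H) + 4/H := by
  rw [integral_comp_abs (f := fbd H)]
  have hsplit : (∫ t in Ioi (0:ℝ), fbd H t)
      = (∫ t in Ioc (0:ℝ) 1, fbd H t) + ∫ t in Ioi (1:ℝ), fbd H t := by
    rw [← setIntegral_union (Set.Ioc_disjoint_Ioi le_rfl) measurableSet_Ioi
      ((fbd_integrableOn_Ioi H hH1 hH2).mono_set (Set.Ioc_subset_Ioi_self))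
      ((fbd_integrableOn_Ioi H hH1 hH2).mono_set (fun t ht => lt_trans one_pos (mem_Ioi.mp ht))),
      Set.Ioc_union_Ioi_eq_Ioi zero_le_one]
  have e1 : (∫ t in Ioc (0:ℝ) 1, fbd H t) = 1/(2-2*H) := by
    rw [setIntegral_congr_fun measurableSet_Ioc (g := fun t : ℝ => t ^ (1-2*H))
      (fun t ht => by simp [fbd, ht.2])]
    rw [← intervalIntegral.integral_of_le zero_le_one,
      integral_rpow (Or.inl (by linarith))]
    rw [Real.one_rpow, Real.zero_rpow (by linarith)]
    ring_nf
  have e2 : (∫ t in Ioi (1:ℝ), fbd H t) = 2/H := by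
    rw [setIntegral_congr_fun measurableSet_Ioi (g := fun t : ℝ => 4 * t ^ (-(1+2*H)))
      (fun t ht => by simp [fbd, not_le.mpr (mem_Ioi.mp ht)])]
    rw [integral_const_mul, integral_Ioi_rpow_of_lt (by linarith) one_pos, Real.one_rpow]
    have hne3 : H ≠ 0 := ne_of_gt hH1
    field_simp
    ring
  rw [hsplit, e1, e2]
  have hne1 : (2:ℝ) - 2*H ≠ 0 := by intro h; rw [sub_eq_zero] at h; linarith
  have hne2 : (1:ℝ) - H ≠ 0 := by intro h; rw [sub_eq_zero] at h; linarith
  have hne3 : H ≠ 0 := ne_of_gt hH1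
  field_simp
  ring

theorem stmt_18 (H : ℝ) (hH : H ∈ Set.Ioo (0:ℝ) (1/2))
    (D : Set ℝ) (hD : IsOpen D) (hDb : Bornology.IsBounded D)
    (S : Set ℝ)
    (hS : S = {r : ℝ | ∃ g : ℝ → ℝ, ContDiff ℝ (⊤ : ℕ∞) g ∧ HasCompactSupport g ∧
      tsupport g ⊆ D ∧
      (∫ x : ℝ, g x ^ 2) + (1/2) * (∫ x : ℝ, deriv g x ^ 2) = 1 ∧
      r = ∫ ξ : ℝ, ‖∫ x : ℝ, Complex.exp (-(Complex.I * ξ * x)) * ((g x : ℂ)) ^ 2‖ ^ 2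
            * |ξ| ^ ((1:ℝ) - 2 * H)}) :
    BddAbove S ∧ sSup S ≤ 1 / (1 - H) + 16 / H := by
  obtain ⟨hH1, hH2⟩ := hH
  have key : ∀ r ∈ S, r ≤ 1 / (1 - H) + 16 / H := by
    subst hS
    rintro r ⟨g, hg, hgs, -, hnorm, rfl⟩
    set F : ℝ → ℂ := fun ξ => ∫ x : ℝ, Complex.exp (-(Complex.I * ξ * x)) * ((g x : ℂ)) ^ 2
      with hF
    have hgc : Continuous g := hg.continuous
    have hg'c : Continuous (deriv g) := hg.continuous_deriv (by simp)
    -- basic integrals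
    have hA0 : 0 ≤ ∫ x : ℝ, g x ^ 2 := integral_nonneg fun x => sq_nonneg _
    have hB0 : 0 ≤ ∫ x : ℝ, deriv g x ^ 2 := integral_nonneg fun x => sq_nonneg _
    have hA1 : (∫ x : ℝ, g x ^ 2) ≤ 1 := by linarith
    -- compact supports
    have hcs2 : HasCompactSupport (fun x : ℝ => ((g x : ℂ)) ^ 2) := by
      refine hgs.mono fun x hx => ?_
      simp only [Function.mem_support] at hx ⊢
      intro h
      exact hx (by rw [h]; norm_num)
    have hcsG : HasCompactSupport (fun x : ℝ => ((2 * g x * deriv g x : ℝ) : ℂ)) := by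
      refine hgs.deriv.mono fun x hx => ?_
      simp only [Function.mem_support] at hx ⊢
      intro h
      exact hx (by rw [h]; norm_num)
    -- continuity of pieces
    have hc2 : Continuous (fun x : ℝ => ((g x : ℂ)) ^ 2) :=
      (Complex.continuous_ofReal.comp hgc).pow 2
    have hcG : Continuous (fun x : ℝ => ((2 * g x * deriv g x : ℝ) : ℂ)) :=
      Complex.continuous_ofReal.comp ((continuous_const.mul hgc).mul hg'c)
    have hec : ∀ ξ : ℝ, Continuous fun x : ℝ => Complex.exp (-(Complex.I * ξ * x)) := by
      intro ξ
      exact Complex.continuous_exp.comp ((continuous_const.mul Complex.continuous_ofReal).neg)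
    -- integrability
    have hint1 : ∀ ξ : ℝ, Integrable fun x : ℝ =>
        Complex.exp (-(Complex.I * ξ * x)) * ((g x : ℂ)) ^ 2 := by
      intro ξ
      exact ((hec ξ).mul hc2).integrable_of_hasCompactSupport (hcs2.mul_left)
    have hint2 : ∀ ξ : ℝ, Integrable fun x : ℝ =>
        Complex.exp (-(Complex.I * ξ * x)) * ((2 * g x * deriv g x : ℝ) : ℂ) := by
      intro ξ
      exact ((hec ξ).mul hcG).integrable_of_hasCompactSupport (hcsG.mul_left)
    -- bound 1 : ‖F ξ‖ ≤ ∫ g²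
    have normF_le : ∀ ξ : ℝ, ‖F ξ‖ ≤ ∫ x : ℝ, g x ^ 2 := by
      intro ξ
      calc ‖F ξ‖ ≤ ∫ x : ℝ, ‖Complex.exp (-(Complex.I * ξ * x)) * ((g x : ℂ)) ^ 2‖ :=
            norm_integral_le_integral_norm _
        _ = ∫ x : ℝ, g x ^ 2 := by
            congr 1
            funext x
            rw [norm_mul, norm_pow]
            have h1 : ‖Complex.exp (-(Complex.I * ξ * x))‖ = 1 := by
              rw [Complex.norm_exp]
              simp
            rw [h1, one_mul, Complex.norm_real, Real.norm_eq_abs, _root_.sq_abs]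
    -- more integrability
    have hsq : HasCompactSupport (fun x : ℝ => g x ^ 2) := by
      refine hgs.mono fun x hx => ?_
      simp only [Function.mem_support] at hx ⊢
      intro h
      exact hx (by rw [h]; norm_num)
    have hsq' : HasCompactSupport (fun x : ℝ => deriv g x ^ 2) := by
      refine hgs.deriv.mono fun x hx => ?_
      simp only [Function.mem_support] at hx ⊢
      intro h
      exact hx (by rw [h]; norm_num)
    have intg2 : Integrable (fun x : ℝ => g x ^ 2) :=
      (hgc.pow 2).integrable_of_hasCompactSupport hsq
    have intg'2 : Integrable (fun x : ℝ => deriv g x ^ 2) :=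
      (hg'c.pow 2).integrable_of_hasCompactSupport hsq'
    -- bound 2 : |ξ| * ‖F ξ‖ ≤ 2
    have key2 : ∀ ξ : ℝ, |ξ| * ‖F ξ‖ ≤ 2 := by
      intro ξ
      have hcsφ : HasCompactSupport
          (fun x : ℝ => Complex.exp (-(Complex.I * ξ * x)) * ((g x : ℂ)) ^ 2) := hcs2.mul_left
      have hcφ' : Continuous (fun x : ℝ =>
          -(Complex.I * ξ) * (Complex.exp (-(Complex.I * ξ * x)) * ((g x : ℂ)) ^ 2)
            + Complex.exp (-(Complex.I * ξ * x)) * ((2 * g x * deriv g x : ℝ) : ℂ)) :=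
        (continuous_const.mul ((hec ξ).mul hc2)).add ((hec ξ).mul hcG)
      have hsum := ibp_zero (fun x => full_deriv_piece hg ξ x) hcsφ hcφ'
      rw [integral_add ((hint1 ξ).const_mul _) (hint2 ξ), integral_const_mul] at hsum
      have hEq : (Complex.I * ξ) * F ξ
          = ∫ x : ℝ, Complex.exp (-(Complex.I * ξ * x)) * ((2 * g x * deriv g x : ℝ) : ℂ) := by
        rw [hF]
        linear_combination -hsum
      have hnorm2 : ‖(Complex.I * (ξ:ℂ)) * F ξ‖ = |ξ| * ‖F ξ‖ := by
        rw [norm_mul]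
        congr 1
        simp
      calc |ξ| * ‖F ξ‖ = ‖(Complex.I * (ξ:ℂ)) * F ξ‖ := hnorm2.symm
        _ = ‖∫ x : ℝ, Complex.exp (-(Complex.I * ξ * x)) * ((2 * g x * deriv g x : ℝ) : ℂ)‖ := by
            rw [hEq]
        _ ≤ ∫ x : ℝ, ‖Complex.exp (-(Complex.I * ξ * x)) * ((2 * g x * deriv g x : ℝ) : ℂ)‖ :=
            norm_integral_le_integral_norm _
        _ ≤ ∫ x : ℝ, (2 * g x ^ 2 + deriv g x ^ 2 / 2) := by
            apply integral_mono ((hint2 ξ).norm) ((intg2.const_mul 2).add (intg'2.div_const 2))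
            intro x
            have h1 : ‖Complex.exp (-(Complex.I * ξ * x))‖ = 1 := by
              rw [Complex.norm_exp]
              simp
            simp only [Pi.add_apply, norm_mul, h1, one_mul, Complex.norm_real,
              Real.norm_eq_abs, abs_mul]
            rw [_root_.abs_two]
            nlinarith [_root_.sq_abs (g x), _root_.sq_abs (deriv g x),
              sq_nonneg (2 * |g x| - |deriv g x|), abs_nonneg (g x), abs_nonneg (deriv g x)]
        _ = 2 * (∫ x : ℝ, g x ^ 2) + (∫ x : ℝ, deriv g x ^ 2) / 2 := by
            rw [integral_add (intg2.const_mul 2) (intg'2.div_const 2), integral_const_mul,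
              integral_div]
        _ ≤ 2 := by linarith
    -- pointwise bound by fbd
    have ptwise : ∀ ξ : ℝ, ‖F ξ‖ ^ 2 * |ξ| ^ ((1:ℝ) - 2 * H) ≤ fbd H |ξ| := by
      intro ξ
      by_cases hξ : |ξ| ≤ 1
      · rw [show fbd H |ξ| = |ξ| ^ (1 - 2*H) from if_pos hξ]
        have hF1 : ‖F ξ‖ ≤ 1 := (normF_le ξ).trans hA1
        have hF2 : ‖F ξ‖ ^ 2 ≤ 1 := by nlinarith [norm_nonneg (F ξ)]
        calc ‖F ξ‖ ^ 2 * |ξ| ^ ((1:ℝ) - 2 * H) ≤ 1 * |ξ| ^ ((1:ℝ) - 2 * H) :=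
              mul_le_mul_of_nonneg_right hF2 (Real.rpow_nonneg (abs_nonneg ξ) _)
          _ = |ξ| ^ (1 - 2*H) := one_mul _
      · push_neg at hξ
        have hpos : (0:ℝ) < |ξ| := lt_trans one_pos hξ
        rw [show fbd H |ξ| = 4 * |ξ| ^ (-(1 + 2*H)) from if_neg (not_le.mpr hξ)]
        have hFle : ‖F ξ‖ ≤ 2 / |ξ| := by
          rw [le_div_iff₀ hpos]
          calc ‖F ξ‖ * |ξ| = |ξ| * ‖F ξ‖ := mul_comm _ _
            _ ≤ 2 := key2 ξ
        have h2 : ‖F ξ‖ ^ 2 ≤ 4 / |ξ| ^ 2 := by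
          calc ‖F ξ‖ ^ 2 ≤ (2 / |ξ|) ^ 2 := pow_le_pow_left₀ (norm_nonneg _) hFle 2
            _ = 4 / |ξ| ^ 2 := by rw [div_pow]; congr 1; norm_num
        have heq : 4 * |ξ| ^ (-(1 + 2*H)) = (4 / |ξ| ^ 2) * |ξ| ^ ((1:ℝ) - 2 * H) := by
          rw [show -(1 + 2*H) = (-2) + ((1:ℝ) - 2 * H) by ring, Real.rpow_add hpos]
          have h2' : |ξ| ^ ((-2):ℝ) = (|ξ| ^ 2)⁻¹ := by
            rw [show ((-2):ℝ) = ((-2:ℤ):ℝ) by norm_num, Real.rpow_intCast, zpow_neg,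
              zpow_two, pow_two]
          rw [h2']
          ring
        rw [heq]
        exact mul_le_mul_of_nonneg_right h2 (Real.rpow_nonneg (abs_nonneg ξ) _)
    have final := integral_mono_of_nonneg
      (Filter.Eventually.of_forall fun ξ =>
        mul_nonneg (pow_nonneg (norm_nonneg (F ξ)) 2) (Real.rpow_nonneg (abs_nonneg ξ) _))
      (fbd_abs_integrable H hH1 hH2) (Filter.Eventually.of_forall ptwise)
    rw [fbd_abs_integral H hH1 hH2] at final
    have h16 : 4 / H ≤ 16 / H := by gcongr <;> norm_num
    calc (∫ ξ : ℝ, ‖F ξ‖ ^ 2 * |ξ| ^ ((1:ℝ) - 2 * H)) ≤ 1 / (1 - H) + 4 / H := final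
      _ ≤ 1 / (1 - H) + 16 / H := by linarith
  refine ⟨⟨1 / (1 - H) + 16 / H, fun r hr => key r hr⟩, Real.sSup_le key ?_⟩
  have h1 : 0 < 1 / (1 - H) := div_pos one_pos (by linarith)
  have h2 : 0 < 16 / H := div_pos (by norm_num) hH1
  linarith
end
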